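/- (90° Lemma, part 1) Let L be an unbounded distributive pre-bilattice such that the k-order (L, ≤_k) has a bottom element 0_k and a top element 1_k. Then for all a, b ∈ L: a ∨_k b = ((a ∧_t b) ∧_t 0_k) ∨_t ((a ∨_t b) ∧_t 1_k) and a ∧_k b = ((a ∧_t b) ∧_t 1_k) ∨_t ((a ∨_t b) ∧_t 0_k). -/

import Mathlib

/-!
Below `0_k` in the t-order, `∨_k` agrees with `∧_t`: there `u ≤_k u ∧_t y` for every `y`,
because `u ∧_t y = u ∧_t (0_k ∨_k y) = u ∨_k (u ∧_t y)`. Dually, `∧_k` agrees with `∧_t`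
below `1_k`, and then so does `∨_k` with `∨_t`. The element `m = 0_k ∨_t 1_k` is the t-top,
since distributing `m ∨_t -` over `0_k ∨_k x` and `x ∧_k 1_k` shows that `m ∨_t x` is both
`≥_k m` and `≤_k m`. Hence every `x = (x ∧_t 0_k) ∨_t (x ∧_t 1_k)`; for `x = a ∨_k b`
both halves are computed by the above, because `∧_t 0_k` and `∧_t 1_k` distribute over
`∨_k`. The formula for `∧_k` is the one for `∨_k` in the pre-bilattice with the k-order
reversed, where `0_k` and `1_k` trade places.
-/

/-- An unbounded distributive pre-bilattice: two lattice structures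
`(∨_t, ∧_t)` and `(∨_k, ∧_k)` on the same carrier, with each of the four
operations distributing over each of the other three. -/
structure DPBU (A : Type*) where
  tsup : A → A → A
  tinf : A → A → A
  ksup : A → A → A
  kinf : A → A → A
  tsup_comm : ∀ a b, tsup a b = tsup b a
  tinf_comm : ∀ a b, tinf a b = tinf b a
  tsup_assoc : ∀ a b c, tsup (tsup a b) c = tsup a (tsup b c)
  tinf_assoc : ∀ a b c, tinf (tinf a b) c = tinf a (tinf b c)
  tsup_absorb : ∀ a b, tsup a (tinf a b) = a
  tinf_absorb : ∀ a b, tinf a (tsup a b) = a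
  ksup_comm : ∀ a b, ksup a b = ksup b a
  kinf_comm : ∀ a b, kinf a b = kinf b a
  ksup_assoc : ∀ a b c, ksup (ksup a b) c = ksup a (ksup b c)
  kinf_assoc : ∀ a b c, kinf (kinf a b) c = kinf a (kinf b c)
  ksup_absorb : ∀ a b, ksup a (kinf a b) = a
  kinf_absorb : ∀ a b, kinf a (ksup a b) = a
  tsup_tinf : ∀ a b c, tsup a (tinf b c) = tinf (tsup a b) (tsup a c)
  tsup_ksup : ∀ a b c, tsup a (ksup b c) = ksup (tsup a b) (tsup a c)
  tsup_kinf : ∀ a b c, tsup a (kinf b c) = kinf (tsup a b) (tsup a c)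
  tinf_tsup : ∀ a b c, tinf a (tsup b c) = tsup (tinf a b) (tinf a c)
  tinf_ksup : ∀ a b c, tinf a (ksup b c) = ksup (tinf a b) (tinf a c)
  tinf_kinf : ∀ a b c, tinf a (kinf b c) = kinf (tinf a b) (tinf a c)
  ksup_tsup : ∀ a b c, ksup a (tsup b c) = tsup (ksup a b) (ksup a c)
  ksup_tinf : ∀ a b c, ksup a (tinf b c) = tinf (ksup a b) (ksup a c)
  ksup_kinf : ∀ a b c, ksup a (kinf b c) = kinf (ksup a b) (ksup a c)
  kinf_tsup : ∀ a b c, kinf a (tsup b c) = tsup (kinf a b) (kinf a c)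
  kinf_tinf : ∀ a b c, kinf a (tinf b c) = tinf (kinf a b) (kinf a c)
  kinf_ksup : ∀ a b c, kinf a (ksup b c) = ksup (kinf a b) (kinf a c)

/-- The truth order `≤_t`. -/
def DPBU.tle {A : Type*} (B : DPBU A) (a b : A) : Prop := B.tsup a b = b

/-- The knowledge order `≤_k`. -/
def DPBU.kle {A : Type*} (B : DPBU A) (a b : A) : Prop := B.ksup a b = b

namespace DPBU

variable {A : Type*} (B : DPBU A)

def kDual : DPBU A where
  tsup := B.tsup
  tinf := B.tinf
  ksup := B.kinf
  kinf := B.ksup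
  tsup_comm := B.tsup_comm
  tinf_comm := B.tinf_comm
  tsup_assoc := B.tsup_assoc
  tinf_assoc := B.tinf_assoc
  tsup_absorb := B.tsup_absorb
  tinf_absorb := B.tinf_absorb
  ksup_comm := B.kinf_comm
  kinf_comm := B.ksup_comm
  ksup_assoc := B.kinf_assoc
  kinf_assoc := B.ksup_assoc
  ksup_absorb := B.kinf_absorb
  kinf_absorb := B.ksup_absorb
  tsup_tinf := B.tsup_tinf
  tsup_ksup := B.tsup_kinf
  tsup_kinf := B.tsup_ksup
  tinf_tsup := B.tinf_tsup
  tinf_ksup := B.tinf_kinf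
  tinf_kinf := B.tinf_ksup
  ksup_tsup := B.kinf_tsup
  ksup_tinf := B.kinf_tinf
  ksup_kinf := B.kinf_ksup
  kinf_tsup := B.ksup_tsup
  kinf_tinf := B.ksup_tinf
  kinf_ksup := B.ksup_kinf

theorem tsup_idem (a : A) : B.tsup a a = a := by
  simpa only [B.tinf_absorb] using B.tsup_absorb a (B.tsup a a)

theorem tinf_idem (a : A) : B.tinf a a = a := by
  simpa only [B.tsup_absorb] using B.tinf_absorb a (B.tinf a a)

theorem ksup_idem (a : A) : B.ksup a a = a := by
  simpa only [B.kinf_absorb] using B.ksup_absorb a (B.ksup a a)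

theorem tinf_ksup_right (a b c : A) :
    B.tinf (B.ksup a b) c = B.ksup (B.tinf a c) (B.tinf b c) := by
  rw [B.tinf_comm, B.tinf_ksup, B.tinf_comm c, B.tinf_comm c]

theorem kle_iff_kinf_eq {a b : A} : B.kle a b ↔ B.kinf a b = a := by
  constructor
  · intro h
    rw [← h, B.kinf_absorb]
  · intro h
    rw [kle, ← h, B.ksup_comm, B.kinf_comm, B.ksup_absorb]

theorem kle_kDual_iff {a b : A} : B.kDual.kle a b ↔ B.kle b a := by
  rw [B.kle_iff_kinf_eq, B.kinf_comm]
  rfl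

theorem kle_antisymm {a b : A} (hab : B.kle a b) (hba : B.kle b a) : a = b := by
  rw [← hba, B.ksup_comm]
  exact hab

theorem ksup_kle {a b c : A} (hac : B.kle a c) (hbc : B.kle b c) :
    B.kle (B.ksup a b) c := by
  rw [kle, B.ksup_assoc, hbc, hac]

theorem tinf_kle_ksup (a b : A) : B.kle (B.tinf a b) (B.ksup a b) := by
  have hb : B.ksup (B.ksup a b) b = B.ksup a b := by
    rw [B.ksup_assoc, B.ksup_idem]
  have ha : B.ksup (B.ksup a b) a = B.ksup a b := by
    rw [B.ksup_comm, ← B.ksup_assoc, B.ksup_idem]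
  rw [kle, B.ksup_comm, B.ksup_tinf, ha, hb, B.tinf_idem]

theorem tinf_tle_right (a c : A) : B.tle (B.tinf a c) c := by
  rw [tle, B.tsup_comm, B.tinf_comm, B.tsup_absorb]

theorem tinf_tinf_distrib_right (a b c : A) :
    B.tinf (B.tinf a b) c = B.tinf (B.tinf a c) (B.tinf b c) := by
  rw [eq_comm, B.tinf_assoc, ← B.tinf_assoc c, B.tinf_comm c b, B.tinf_assoc b, B.tinf_idem,
    ← B.tinf_assoc]

theorem tsup_tle {a b c : A} (hac : B.tle a c) (hbc : B.tle b c) :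
    B.tle (B.tsup a b) c := by
  rw [tle, B.tsup_assoc, hbc, hac]

theorem ksup_tle {a b c : A} (hac : B.tle a c) (hbc : B.tle b c) :
    B.tle (B.ksup a b) c := by
  rw [tle, B.tsup_comm, B.tsup_ksup, B.tsup_comm, hac, B.tsup_comm, hbc, B.ksup_idem]

theorem kle_tinf_of_tle {zk u : A} (hbot : ∀ a, B.kle zk a) (hu : B.tle u zk) (y : A) :
    B.kle u (B.tinf u y) := by
  have hu' : B.tinf u zk = u := by rw [← hu, B.tinf_absorb]
  calc B.ksup u (B.tinf u y) = B.tinf u (B.ksup zk y) := by rw [B.tinf_ksup, hu']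
    _ = B.tinf u y := by rw [hbot y]

theorem ksup_eq_tinf_of_tle {zk u v : A} (hbot : ∀ a, B.kle zk a)
    (hu : B.tle u zk) (hv : B.tle v zk) : B.ksup u v = B.tinf u v := by
  have hvu := B.kle_tinf_of_tle hbot hv u
  rw [B.tinf_comm] at hvu
  exact B.kle_antisymm (B.ksup_kle (B.kle_tinf_of_tle hbot hu v) hvu) (B.tinf_kle_ksup u v)

/-- A join is determined by its meet; here the two lattices are the t- and k-structures
restricted to the t-down-set of `c`, which is closed under all four operations. -/
theorem ksup_eq_tsup_of_kinf_eq_tinf {c : A}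
    (h : ∀ u v, B.tle u c → B.tle v c → B.kinf u v = B.tinf u v) {u v : A}
    (hu : B.tle u c) (hv : B.tle v c) : B.ksup u v = B.tsup u v := by
  have hs : B.tle (B.ksup u v) c := B.ksup_tle hu hv
  have hj : B.tle (B.tsup u v) c := B.tsup_tle hu hv
  have hks : B.kinf (B.ksup u v) (B.tsup u v) = B.ksup u v := by
    rw [B.kinf_comm, B.kinf_ksup, h _ _ hj hu, h _ _ hj hv, B.tinf_comm, B.tinf_absorb,
      B.tinf_comm, B.tsup_comm, B.tinf_absorb]
  have htj : B.tinf (B.tsup u v) (B.ksup u v) = B.tsup u v := by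
    rw [B.tinf_comm, B.tinf_tsup, ← h _ _ hs hu, ← h _ _ hs hv, B.kinf_comm, B.kinf_absorb,
      B.kinf_comm, B.ksup_comm, B.kinf_absorb]
  rw [← hks, h _ _ hs hj, B.tinf_comm, htj]

theorem ksup_eq_tsup_of_tle {ok u v : A} (htop : ∀ a, B.kle a ok)
    (hu : B.tle u ok) (hv : B.tle v ok) : B.ksup u v = B.tsup u v :=
  B.ksup_eq_tsup_of_kinf_eq_tinf
    (fun _ _ => B.kDual.ksup_eq_tinf_of_tle fun a => B.kle_kDual_iff.2 (htop a)) hu hv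

theorem kle_tsup_of_tle {zk c : A} (hbot : ∀ a, B.kle zk a) (hc : B.tle zk c) (x : A) :
    B.kle c (B.tsup c x) := by
  calc B.ksup c (B.tsup c x) = B.tsup c (B.ksup zk x) := by
        rw [B.tsup_ksup, B.tsup_comm c zk, hc]
    _ = B.tsup c x := by rw [hbot x]

theorem tle_tsup_kbot_ktop {zk ok : A} (hbot : ∀ a, B.kle zk a) (htop : ∀ a, B.kle a ok)
    (x : A) : B.tle x (B.tsup zk ok) := by
  have hzm : B.tle zk (B.tsup zk ok) := by rw [tle, ← B.tsup_assoc, B.tsup_idem]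
  have hom : B.tle ok (B.tsup zk ok) := by
    rw [tle, B.tsup_comm zk ok, ← B.tsup_assoc, B.tsup_idem]
  have hkle : B.kle (B.tsup (B.tsup zk ok) x) (B.tsup zk ok) :=
    B.kle_kDual_iff.1 (B.kDual.kle_tsup_of_tle (fun a => B.kle_kDual_iff.2 (htop a)) hom x)
  rw [tle, B.tsup_comm]
  exact B.kle_antisymm hkle (B.kle_tsup_of_tle hbot hzm x)

theorem ksup_eq_of_kbot_ktop {zk ok : A} (hbot : ∀ a, B.kle zk a) (htop : ∀ a, B.kle a ok)
    (a b : A) :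
    B.ksup a b = B.tsup (B.tinf (B.tinf a b) zk) (B.tinf (B.tsup a b) ok) := by
  calc B.ksup a b = B.tinf (B.ksup a b) (B.tsup zk ok) := by
        rw [← B.tle_tsup_kbot_ktop hbot htop (B.ksup a b), B.tinf_absorb]
    _ = B.tsup (B.ksup (B.tinf a zk) (B.tinf b zk)) (B.ksup (B.tinf a ok) (B.tinf b ok)) := by
        rw [B.tinf_tsup, B.tinf_comm, B.tinf_ksup_right, B.tinf_comm, B.tinf_ksup_right]
    _ = B.tsup (B.tinf (B.tinf a zk) (B.tinf b zk)) (B.tsup (B.tinf a ok) (B.tinf b ok)) := by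
        rw [B.ksup_eq_tinf_of_tle hbot (B.tinf_tle_right a zk) (B.tinf_tle_right b zk),
          B.ksup_eq_tsup_of_tle htop (B.tinf_tle_right a ok) (B.tinf_tle_right b ok)]
    _ = B.tsup (B.tinf (B.tinf a b) zk) (B.tinf (B.tsup a b) ok) := by
        rw [← B.tinf_tinf_distrib_right, B.tinf_comm (B.tsup a b), B.tinf_tsup, B.tinf_comm ok a,
          B.tinf_comm ok b]

end DPBU

/-- The 90° Lemma, part 1: if the k-order has bottom `0_k` and top `1_k`, then
`∨_k` and `∧_k` are definable from `∨_t`, `∧_t`, `0_k`, `1_k`. -/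
theorem stmt_7 {A : Type*} (B : DPBU A) (zk ok : A)
    (hbot : ∀ a, B.kle zk a) (htop : ∀ a, B.kle a ok) :
    ∀ a b : A,
      B.ksup a b =
        B.tsup (B.tinf (B.tinf a b) zk) (B.tinf (B.tsup a b) ok) ∧
      B.kinf a b =
        B.tsup (B.tinf (B.tinf a b) ok) (B.tinf (B.tsup a b) zk) := fun a b =>
  ⟨B.ksup_eq_of_kbot_ktop hbot htop a b,
    B.kDual.ksup_eq_of_kbot_ktop (fun a => B.kle_kDual_iff.2 (htop a))
      (fun a => B.kle_kDual_iff.2 (hbot a)) a b⟩
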